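/- arXiv:2006.09221 — 5 statements merged into one kernel-verified Lean document; each statement's English description precedes it below -/
import Mathlib

section
/- Let Ω be a probability space and f: Ω → ℂ an integrable random variable such that f(ω) ≠ 0 for all ω and the angle between f(ω₁) and f(ω₂) (viewed as nonzero vectors in ℝ²) is at most θ for all ω₁, ω₂ ∈ Ω, where 0 ≤ θ < 2π/3. Then |E f| ≥ cos(θ/2) · E |f|. -/
open MeasureTheory

/-- The angle between two complex numbers viewed as vectors in the plane. -/
noncomputable def Complex.angle (u v : ℂ) : ℝ :=
  Real.arccos ((u * (starRingEnd ℂ) v).re / (‖u‖ * ‖v‖))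

/-!
If every value of `f` makes an angle at most `φ ≤ π` with a fixed nonzero vector `b`, then
`⟪b, f ω⟫ ≥ cos φ * ‖b‖ * ‖f ω‖`, and integrating gives `‖b‖ * ‖∫ f‖ ≥ ⟪b, ∫ f⟫ ≥ cos φ * ‖b‖ * ∫ ‖f‖`.
Such a `b` exists with `φ = θ / 2`. Measure arguments relative to one value `f ω₀`; they lie in
`[-θ, θ]`. The argument of `f ω₁ / f ω₂` agrees with the difference of the relative arguments of
`f ω₁` and `f ω₂` modulo `2 * π` and differs from it by at most `3 * θ < 2 * π`, so the two are
equal. Hence the relative arguments lie in an interval of length `θ`, and `b` points in the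
direction of its midpoint.
-/

open Real InnerProductGeometry

theorem Complex.angle_eq_innerProductGeometry_angle (u v : ℂ) :
    Complex.angle u v = InnerProductGeometry.angle u v := by
  unfold Complex.angle InnerProductGeometry.angle
  rw [Complex.inner]
  congr 2
  simp only [Complex.mul_re, Complex.conj_re, Complex.conj_im]
  ring

theorem Real.Angle.eq_of_coe_eq_of_abs_sub_lt {a b : ℝ} (h : (a : Real.Angle) = b)
    (hab : |a - b| < 2 * π) : a = b := by
  obtain ⟨k, hk⟩ := Real.Angle.angle_eq_iff_two_pi_dvd_sub.1 h
  rw [hk, abs_mul, abs_of_pos Real.two_pi_pos, mul_lt_iff_lt_one_right Real.two_pi_pos,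
    ← Int.cast_abs, ← Int.cast_one, Int.cast_lt, Int.abs_lt_one_iff] at hab
  simpa [hab, sub_eq_zero] using hk

theorem exists_forall_abs_sub_le_half {ι : Type*} [Nonempty ι] {g : ι → ℝ} {θ : ℝ}
    (h : ∀ i j, g i - g j ≤ θ) : ∃ m, ∀ i, |g i - m| ≤ θ / 2 := by
  obtain ⟨i₀⟩ := ‹Nonempty ι›
  have hbelow : BddBelow (Set.range g) := ⟨g i₀ - θ, by rintro _ ⟨i, rfl⟩; linarith [h i₀ i]⟩
  have habove : BddAbove (Set.range g) := ⟨g i₀ + θ, by rintro _ ⟨i, rfl⟩; linarith [h i i₀]⟩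
  have hspan : ⨆ i, g i ≤ (⨅ i, g i) + θ := ciSup_le fun i => by
    have : g i - θ ≤ ⨅ j, g j := le_ciInf fun j => by linarith [h i j]
    linarith
  refine ⟨((⨅ i, g i) + ⨆ i, g i) / 2, fun i => abs_le.2 ⟨?_, ?_⟩⟩ <;>
    linarith [ciInf_le hbelow i, le_ciSup habove i]

theorem cos_mul_integral_norm_le_norm_integral {Ω E : Type*} [MeasurableSpace Ω] {μ : Measure Ω}
    [NormedAddCommGroup E] [InnerProductSpace ℝ E] [CompleteSpace E] {f : Ω → E}
    (hf : Integrable f μ) {b : E} (hb : b ≠ 0) {φ : ℝ} (hφ : φ ≤ π)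
    (h : ∀ᵐ ω ∂μ, angle b (f ω) ≤ φ) :
    cos φ * ∫ ω, ‖f ω‖ ∂μ ≤ ‖∫ ω, f ω ∂μ‖ := by
  have hpoint : ∀ᵐ ω ∂μ, ‖b‖ * (cos φ * ‖f ω‖) ≤ inner ℝ b (f ω) := by
    filter_upwards [h] with ω hω
    rw [← cos_angle_mul_norm_mul_norm, mul_left_comm]
    exact mul_le_mul_of_nonneg_right (cos_le_cos_of_nonneg_of_le_pi (angle_nonneg _ _) hφ hω)
      (by positivity)
  refine le_of_mul_le_mul_left ?_ (norm_pos_iff.2 hb)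
  calc ‖b‖ * (cos φ * ∫ ω, ‖f ω‖ ∂μ) = ∫ ω, ‖b‖ * (cos φ * ‖f ω‖) ∂μ := by
        rw [integral_const_mul, integral_const_mul]
    _ ≤ ∫ ω, inner ℝ b (f ω) ∂μ :=
        integral_mono_ae ((hf.norm.const_mul _).const_mul _) (hf.const_inner b) hpoint
    _ = inner ℝ b (∫ ω, f ω ∂μ) := integral_inner hf b
    _ ≤ ‖b‖ * ‖∫ ω, f ω ∂μ‖ := real_inner_le_norm _ _

theorem exists_angle_le_half_of_forall_angle_le {ι : Type*} {z : ι → ℂ}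
    (hz : ∀ i, z i ≠ 0) {θ : ℝ} (hθ : θ < 2 * π / 3) (h : ∀ i j, angle (z i) (z j) ≤ θ) :
    ∃ b ≠ 0, ∀ i, angle b (z i) ≤ θ / 2 := by
  rcases isEmpty_or_nonempty ι with _ | _
  · exact ⟨1, one_ne_zero, isEmptyElim⟩
  obtain ⟨i₀⟩ := ‹Nonempty ι›
  have ha := hz i₀
  set g : ι → ℝ := fun i => Complex.arg (z i / z i₀)
  have hg : ∀ i, |g i| ≤ θ := fun i => by
    simpa only [Complex.angle_eq_abs_arg (hz i) ha] using h i i₀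
  have hdiff : ∀ i j, g i - g j ≤ θ := fun i j => by
    have hcoe : (Complex.arg (z i / z j) : Real.Angle) = (g i - g j : ℝ) := by
      rw [Real.Angle.coe_sub, ← Complex.arg_div_coe_angle (div_ne_zero (hz i) ha)
        (div_ne_zero (hz j) ha), div_div_div_cancel_right₀ ha]
    have hij : |Complex.arg (z i / z j)| ≤ θ := by
      rw [← Complex.angle_eq_abs_arg (hz i) (hz j)]
      exact h i j
    have heq := Real.Angle.eq_of_coe_eq_of_abs_sub_lt hcoe <| by
      have := abs_le.1 hij
      have := abs_le.1 (hg i)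
      have := abs_le.1 (hg j)
      exact abs_lt.2 ⟨by linarith, by linarith⟩
    linarith [le_abs_self (Complex.arg (z i / z j))]
  obtain ⟨m, hm⟩ := exists_forall_abs_sub_le_half hdiff
  have hb : z i₀ * Complex.exp (m * Complex.I) ≠ 0 := mul_ne_zero ha (Complex.exp_ne_zero _)
  refine ⟨_, hb, fun i => ?_⟩
  have hcoe : (Complex.arg (z i / (z i₀ * Complex.exp (m * Complex.I))) : Real.Angle) =
      (g i - m : ℝ) := by
    rw [← div_div, Complex.arg_div_coe_angle (div_ne_zero (hz i) ha) (Complex.exp_ne_zero _),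
      Complex.arg_exp_mul_I, Real.Angle.coe_toIocMod, Real.Angle.coe_sub]
  have heq := Real.Angle.eq_of_coe_eq_of_abs_sub_lt hcoe <| by
    have := abs_le.1 (Complex.abs_arg_le_pi (z i / (z i₀ * Complex.exp (m * Complex.I))))
    have := abs_le.1 (hm i)
    exact abs_lt.2 ⟨by linarith, by linarith⟩
  rw [angle_comm, Complex.angle_eq_abs_arg (hz i) hb, heq]
  exact hm i

theorem stmt_2_general {Ω : Type*} [MeasurableSpace Ω] (μ : Measure Ω)
    (f : Ω → ℂ) (hf : Integrable f μ) (hne : ∀ ω, f ω ≠ 0)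
    (θ : ℝ) (hθ : θ < 2 * Real.pi / 3)
    (hangle : ∀ ω₁ ω₂, Complex.angle (f ω₁) (f ω₂) ≤ θ) :
    ‖∫ ω, f ω ∂μ‖ ≥ Real.cos (θ / 2) * ∫ ω, ‖f ω‖ ∂μ := by
  simp only [Complex.angle_eq_innerProductGeometry_angle] at hangle
  obtain ⟨b, hb, hbf⟩ := exists_angle_le_half_of_forall_angle_le hne hθ hangle
  exact cos_mul_integral_norm_le_norm_integral hf hb (by linarith [pi_pos]) (ae_of_all μ hbf)

theorem stmt_2 {Ω : Type*} [MeasurableSpace Ω] (μ : Measure Ω) [IsProbabilityMeasure μ]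
    (f : Ω → ℂ) (hf : Integrable f μ) (hne : ∀ ω, f ω ≠ 0)
    (θ : ℝ) (hθ0 : 0 ≤ θ) (hθ : θ < 2 * Real.pi / 3)
    (hangle : ∀ ω₁ ω₂, Complex.angle (f ω₁) (f ω₂) ≤ θ) :
    ‖∫ ω, f ω ∂μ‖ ≥ Real.cos (θ / 2) * ∫ ω, ‖f ω‖ ∂μ :=
  stmt_2_general μ f hf hne θ hθ hangle
end

section
/- Let g: [−1,1] → ℂ be given by an absolutely convergent power series g(t) = Σ_{a≥1} c_a t^a with Σ_{a≥1} |c_a| ≤ (θ/2)·cos(θ/2) for some 0 ≤ θ < 2π/3. Then for any t₁, t₂ ∈ [−1,1], the angle between e^{g(t₁)} and e^{g(t₂)} (as nonzero complex numbers) is at most θ. -/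
open Real in
theorem Real.arccos_cos_le_abs (x : ℝ) : arccos (cos x) ≤ |x| := by
  rcases le_or_gt |x| π with hx | hx
  · rw [← cos_abs, arccos_cos (abs_nonneg x) hx]
  · exact (arccos_le_pi _).trans hx.le

theorem Complex.angle_cexp_cexp (z w : ℂ) :
    Complex.angle (Complex.exp z) (Complex.exp w) = Real.arccos (Real.cos (z.im - w.im)) := by
  have hre : (Complex.exp z * (starRingEnd ℂ) (Complex.exp w)).re =
      Real.exp z.re * Real.exp w.re * Real.cos (z.im - w.im) := by
    rw [← Complex.exp_conj, ← Complex.exp_add, Complex.exp_re]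
    simp only [Complex.add_re, Complex.add_im, Complex.conj_re, Complex.conj_im, Real.exp_add,
      sub_eq_add_neg]
  rw [Complex.angle, hre, Complex.norm_exp, Complex.norm_exp, mul_div_cancel_left₀ _ (by positivity)]

theorem Complex.angle_cexp_cexp_le (z w : ℂ) :
    Complex.angle (Complex.exp z) (Complex.exp w) ≤ |z.im - w.im| :=
  (Complex.angle_cexp_cexp z w).symm ▸ Real.arccos_cos_le_abs _

theorem norm_tsum_mul_pow_le {R : Type*} [NormedRing R] [NormOneClass R] {c : ℕ → R}
    (hc : Summable fun a => ‖c a‖) {x : R} (hx : ‖x‖ ≤ 1) :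
    ‖∑' a, c a * x ^ a‖ ≤ ∑' a, ‖c a‖ :=
  tsum_of_norm_bounded hc.hasSum fun a =>
    calc ‖c a * x ^ a‖ ≤ ‖c a‖ * ‖x‖ ^ a := (norm_mul_le _ _).trans <|
          mul_le_mul_of_nonneg_left (norm_pow_le x a) (norm_nonneg _)
      _ ≤ ‖c a‖ := mul_le_of_le_one_right (norm_nonneg _) (pow_le_one₀ (norm_nonneg x) hx)

theorem stmt_3_general (c : ℕ → ℂ) (hsum : Summable fun a => ‖c a‖)
    (θ : ℝ) (hθ0 : 0 ≤ θ)
    (hbound : ∑' a : ℕ, ‖c a‖ ≤ (θ / 2) * Real.cos (θ / 2))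
    (g : ℝ → ℂ) (hg : ∀ t ∈ Set.Icc (-1 : ℝ) 1, g t = ∑' a : ℕ, c a * (t : ℂ) ^ a) :
    ∀ t₁ ∈ Set.Icc (-1 : ℝ) 1, ∀ t₂ ∈ Set.Icc (-1 : ℝ) 1,
      Complex.angle (Complex.exp (g t₁)) (Complex.exp (g t₂)) ≤ θ := by
  intro t₁ ht₁ t₂ ht₂
  have him : ∀ t ∈ Set.Icc (-1 : ℝ) 1, |(g t).im| ≤ ∑' a, ‖c a‖ := fun t ht =>
    (Complex.abs_im_le_norm _).trans <| hg t ht ▸ norm_tsum_mul_pow_le hsum <| by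
      simpa [Complex.norm_real] using abs_le.2 ht
  calc Complex.angle (Complex.exp (g t₁)) (Complex.exp (g t₂))
      ≤ |(g t₁).im - (g t₂).im| := Complex.angle_cexp_cexp_le _ _
    _ ≤ |(g t₁).im| + |(g t₂).im| := abs_sub _ _
    _ ≤ θ * Real.cos (θ / 2) := by linarith [him t₁ ht₁, him t₂ ht₂]
    _ ≤ θ := mul_le_of_le_one_right hθ0 (Real.cos_le_one _)

theorem stmt_3 (c : ℕ → ℂ) (hc0 : c 0 = 0) (hsum : Summable fun a => ‖c a‖)
    (θ : ℝ) (hθ0 : 0 ≤ θ) (hθ : θ < 2 * Real.pi / 3)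
    (hbound : ∑' a : ℕ, ‖c a‖ ≤ (θ / 2) * Real.cos (θ / 2))
    (g : ℝ → ℂ) (hg : ∀ t ∈ Set.Icc (-1 : ℝ) 1, g t = ∑' a : ℕ, c a * (t : ℂ) ^ a) :
    ∀ t₁ ∈ Set.Icc (-1 : ℝ) 1, ∀ t₂ ∈ Set.Icc (-1 : ℝ) 1,
      Complex.angle (Complex.exp (g t₁)) (Complex.exp (g t₂)) ≤ θ :=
  stmt_3_general c hsum θ hθ0 hbound g hg
end

section
/- Let g: [−1,1] → ℂ be g(t) = Σ_{a≥1} c_a t^a, an absolutely and uniformly convergent series with Σ_{a≥1} |c_a| ≤ (θ/2)·cos(θ/2) for some 0 ≤ θ < 2π/3, and let ν be a finite measure on [−1,1]. Then |∫ e^{g(t)} dν(t)| ≥ cos(θ/2) · ∫ |e^{g(t)}| dν(t). -/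
/-!
On `[-1, 1]` the exponent `g` has modulus at most `(θ/2) cos(θ/2) ≤ θ/2`, so every value of
`e^{g(t)}` lies within angle `θ/2` of the positive real axis. Hence
`cos(θ/2) |e^{g(t)}| ≤ Re e^{g(t)}` pointwise, and integrating gives
`cos(θ/2) ∫ |e^g| dν ≤ Re ∫ e^g dν ≤ |∫ e^g dν|`.
-/

open MeasureTheory

section PowerSeries

variable {𝕜 : Type*} [NormedField 𝕜]

theorem norm_mul_pow_le_of_norm_le_one (a : 𝕜) {z : 𝕜} (hz : ‖z‖ ≤ 1) (n : ℕ) :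
    ‖a * z ^ n‖ ≤ ‖a‖ := by
  rw [norm_mul, norm_pow]
  exact mul_le_of_le_one_right (norm_nonneg a) (pow_le_one₀ (norm_nonneg z) hz)

theorem norm_tsum_mul_pow_le_s4 {c : ℕ → 𝕜} (hc : Summable fun n => ‖c n‖) {z : 𝕜}
    (hz : ‖z‖ ≤ 1) : ‖∑' n, c n * z ^ n‖ ≤ ∑' n, ‖c n‖ :=
  tsum_of_norm_bounded hc.hasSum fun n => norm_mul_pow_le_of_norm_le_one (c n) hz n

theorem continuousOn_tsum_mul_pow [CompleteSpace 𝕜] {c : ℕ → 𝕜}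
    (hc : Summable fun n => ‖c n‖) :
    ContinuousOn (fun z => ∑' n, c n * z ^ n) (Metric.closedBall (0 : 𝕜) 1) :=
  continuousOn_tsum (fun n => (continuous_const.mul (continuous_pow n)).continuousOn) hc
    fun n _ hz => norm_mul_pow_le_of_norm_le_one _ (mem_closedBall_zero_iff.mp hz) n

end PowerSeries

theorem Complex.cos_mul_norm_exp_le_re_exp {z : ℂ} {φ : ℝ} (hz : |z.im| ≤ φ)
    (hφ : φ ≤ Real.pi) : Real.cos φ * ‖Complex.exp z‖ ≤ (Complex.exp z).re := by
  have hcos : Real.cos φ ≤ Real.cos z.im := by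
    rw [← Real.cos_abs z.im]
    exact Real.cos_le_cos_of_nonneg_of_le_pi (abs_nonneg _) hφ hz
  rw [Complex.exp_re, Complex.norm_exp, mul_comm]
  exact mul_le_mul_of_nonneg_left hcos (Real.exp_pos _).le

theorem mul_integral_norm_le_norm_integral {α : Type*} [MeasurableSpace α] {μ : Measure α}
    {f : α → ℂ} {c : ℝ} (hf : Integrable f μ) (h : ∀ᵐ x ∂μ, c * ‖f x‖ ≤ (f x).re) :
    c * ∫ x, ‖f x‖ ∂μ ≤ ‖∫ x, f x ∂μ‖ :=
  calc c * ∫ x, ‖f x‖ ∂μ = ∫ x, c * ‖f x‖ ∂μ := (integral_const_mul _ _).symm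
    _ ≤ ∫ x, (f x).re ∂μ := integral_mono_ae (hf.norm.const_mul c) hf.re h
    _ = (∫ x, f x ∂μ).re := integral_re hf
    _ ≤ ‖∫ x, f x ∂μ‖ := Complex.re_le_norm _

theorem stmt_4_general (c : ℕ → ℂ) (hsum : Summable fun a => ‖c a‖)
    (θ : ℝ) (hθ0 : 0 ≤ θ) (hθ : θ < 2 * Real.pi / 3)
    (hbound : ∑' a : ℕ, ‖c a‖ ≤ (θ / 2) * Real.cos (θ / 2))
    (g : ℝ → ℂ) (hg : ∀ t ∈ Set.Icc (-1 : ℝ) 1, g t = ∑' a : ℕ, c a * (t : ℂ) ^ a)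
    (ν : Measure ℝ) [IsFiniteMeasure ν] :
    ‖∫ t in Set.Icc (-1 : ℝ) 1, Complex.exp (g t) ∂ν‖ ≥
      Real.cos (θ / 2) * ∫ t in Set.Icc (-1 : ℝ) 1, ‖Complex.exp (g t)‖ ∂ν := by
  set h : ℂ → ℂ := fun z => ∑' a, c a * z ^ a
  have h_disk : Set.MapsTo (fun t : ℝ => (t : ℂ)) (Set.Icc (-1) 1) (Metric.closedBall 0 1) :=
    fun t ht => by simpa [abs_le] using ht
  have h_cont : ContinuousOn (fun t : ℝ => Complex.exp (h t)) (Set.Icc (-1) 1) :=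
    Complex.continuous_exp.comp_continuousOn
      ((continuousOn_tsum_mul_pow hsum).comp Complex.continuous_ofReal.continuousOn h_disk)
  have h_angle : ∀ t ∈ Set.Icc (-1 : ℝ) 1,
      Real.cos (θ / 2) * ‖Complex.exp (h t)‖ ≤ (Complex.exp (h t)).re := by
    intro t ht
    have h_norm : ‖h t‖ ≤ θ / 2 * Real.cos (θ / 2) :=
      (norm_tsum_mul_pow_le_s4 hsum (mem_closedBall_zero_iff.mp (h_disk ht))).trans hbound
    have h_im : |(h t).im| ≤ θ / 2 :=
      (Complex.abs_im_le_norm _).trans <| h_norm.trans <|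
        mul_le_of_le_one_right (by linarith) (Real.cos_le_one _)
    exact Complex.cos_mul_norm_exp_le_re_exp h_im (by linarith [Real.pi_pos])
  rw [setIntegral_congr_fun measurableSet_Icc fun t ht => congrArg Complex.exp (hg t ht),
    setIntegral_congr_fun measurableSet_Icc fun t ht => congrArg (‖Complex.exp ·‖) (hg t ht)]
  exact mul_integral_norm_le_norm_integral (h_cont.integrableOn_compact isCompact_Icc)
    (ae_restrict_of_forall_mem measurableSet_Icc h_angle)

theorem stmt_4 (c : ℕ → ℂ) (hc0 : c 0 = 0) (hsum : Summable fun a => ‖c a‖)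
    (θ : ℝ) (hθ0 : 0 ≤ θ) (hθ : θ < 2 * Real.pi / 3)
    (hbound : ∑' a : ℕ, ‖c a‖ ≤ (θ / 2) * Real.cos (θ / 2))
    (g : ℝ → ℂ) (hg : ∀ t ∈ Set.Icc (-1 : ℝ) 1, g t = ∑' a : ℕ, c a * (t : ℂ) ^ a)
    (ν : Measure ℝ) [IsFiniteMeasure ν] :
    ‖∫ t in Set.Icc (-1 : ℝ) 1, Complex.exp (g t) ∂ν‖ ≥
      Real.cos (θ / 2) * ∫ t in Set.Icc (-1 : ℝ) 1, ‖Complex.exp (g t)‖ ∂ν :=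
  stmt_4_general c hsum θ hθ0 hθ hbound g hg ν
end

section
/- Let q₁,…,q_m: ℝⁿ → ℝ be quadratic forms q_i(x) = (1/2)⟨Q_i x, x⟩ with real symmetric matrices Q_i satisfying ‖Σᵢ z_i Q_i‖ < 1/2 for all complex z₁,…,z_m with |z_i| ≤ 1. Then for every complex z with |z| ≤ 1, (2π)^{-n/2} ∫_{ℝⁿ} e^{-‖x‖²/2} ∏_{i=1}^m (sin²(z q_i(x)) / (z² q_i(x)²)) dx = ∫_{[−1,1]^m} ∏_{i=1}^m (1−|t_i|) · det(I − 2z√−1 Σᵢ t_i Q_i)^{-1/2} dt. -/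
/-!
Fejér's identity `sin² w / w² = ∫_{-1}^{1} (1 - |s|) e^{2isw} ds`, applied to each factor, turns the
product of the `sinc²` terms into an integral over the cube of `∏ (1 - |tᵢ|) · e^{iz⟨A_t x, x⟩}`
with `A_t = ∑ tᵢ Qᵢ`. By compactness of the cube the norm condition gives `‖A_t‖ ≤ c < 1/2`
uniformly in `t`, so the integrand is dominated by the Gaussian `e^{-(1/2 - c)‖x‖²}` and Fubini
applies. For fixed `t`, diagonalizing `A_t` splits the Gaussian integral in `x` into
one-dimensional ones, `∫ e^{-(1/2 - izλ) y²} dy = (π / (1/2 - izλ))^{1/2}`, whose product,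
normalized by `(2π)^{-n/2}`, is `∏ₖ (1 - 2izλₖ)^{-1/2}`.
-/

open MeasureTheory

/-- `sin² w / w²`, interpreted as `1` at `w = 0`. -/
noncomputable def sinc2 (w : ℂ) : ℂ := if w = 0 then 1 else Complex.sin w ^ 2 / w ^ 2

open Complex Matrix WithLp intervalIntegral
open scoped Matrix.Norms.L2Operator RealInnerProductSpace

theorem Complex.ofReal_div_cpow {r : ℝ} (hr : 0 < r) {d : ℂ} (hd : d.arg ≠ Real.pi) (s : ℂ) :
    ((r : ℂ) / d) ^ s = (r : ℂ) ^ s * d ^ (-s) := by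
  rcases eq_or_ne d 0 with rfl | hd0
  · rcases eq_or_ne s 0 with rfl | hs
    · simp
    · simp [zero_cpow hs, zero_cpow (neg_ne_zero.mpr hs)]
  have hr0 : (r : ℂ) ≠ 0 := ofReal_ne_zero.mpr hr.ne'
  rw [cpow_def_of_ne_zero (div_ne_zero hr0 hd0), cpow_def_of_ne_zero hr0, cpow_def_of_ne_zero hd0,
    div_eq_mul_inv, log_ofReal_mul hr (inv_ne_zero hd0), log_inv _ hd, ← exp_add, ofReal_log hr.le]
  ring_nf

theorem Complex.re_one_sub_two_mul_ofReal_pos {w : ℂ} (hw : ‖w‖ ≤ 1) {r : ℝ} (hr : |r| < 1 / 2) :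
    0 < (1 - 2 * w * r).re := by
  have : |w.re * r| < 1 / 2 := by
    rw [abs_mul]
    nlinarith [abs_re_le_norm w, abs_nonneg r, abs_nonneg w.re]
  simp only [sub_re, one_re, mul_re, re_ofNat, im_ofNat, ofReal_re, ofReal_im]
  linarith [(abs_lt.mp this).2]

theorem EuclideanSpace.norm_toLp_ofReal_comp {ι : Type*} [Fintype ι] (v : ι → ℝ) :
    ‖toLp 2 (((↑) : ℝ → ℂ) ∘ v)‖ = ‖toLp 2 v‖ := by
  simp [EuclideanSpace.norm_eq]

theorem setIntegral_univ_pi_prod {ι 𝕜 : Type*} [Fintype ι] [RCLike 𝕜] (s : Set ℝ)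
    (f : ι → ℝ → 𝕜) :
    ∫ t in Set.univ.pi fun _ => s, ∏ i, f i (t i) = ∏ i, ∫ u in s, f i u := by
  rw [volume_pi, Measure.restrict_pi_pi, integral_fintype_prod_eq_prod]

theorem integrable_uncurry_of_norm_le_exp_neg_mul_sq_norm {α V : Type*} [MeasurableSpace α]
    {μ : Measure α} [IsFiniteMeasure μ] [NormedAddCommGroup V] [InnerProductSpace ℝ V]
    [FiniteDimensional ℝ V] [MeasurableSpace V] [BorelSpace V] {F : α → V → ℂ}
    (hF : AEStronglyMeasurable (Function.uncurry F) (μ.prod volume)) {b : ℝ} (hb : 0 < b)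
    (hbound : ∀ᵐ t ∂μ, ∀ x, ‖F t x‖ ≤ Real.exp (-b * ‖x‖ ^ 2)) :
    Integrable (Function.uncurry F) (μ.prod volume) := by
  have hgauss : Integrable (fun x : V => cexp (-b * ‖x‖ ^ 2)) := by
    simpa using GaussianFourier.integrable_cexp_neg_mul_sq_norm_add (b := b) (by simpa) 0 (0 : V)
  refine ((integrable_const (1 : ℂ)).mul_prod hgauss).mono hF ?_
  filter_upwards [Measure.quasiMeasurePreserving_fst.ae hbound] with p hp
  simpa [Function.uncurry_def, norm_exp, ← ofReal_pow] using hp p.2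

theorem sq_mul_integral_one_sub_mul_cexp (a : ℂ) :
    a ^ 2 * ∫ t in (0 : ℝ)..1, ((1 - t : ℝ) : ℂ) * cexp (a * t) = cexp a - 1 - a := by
  rcases eq_or_ne a 0 with rfl | ha
  · simp
  have hderiv (t : ℝ) : HasDerivAt (fun u : ℝ => cexp (a * u) * ((1 - u) / a + 1 / a ^ 2))
      (((1 - t : ℝ) : ℂ) * cexp (a * t)) t := by
    have hG : HasDerivAt (fun u : ℂ => cexp (a * u) * ((1 - u) / a + 1 / a ^ 2))
        (((1 - t : ℝ) : ℂ) * cexp (a * t)) t := by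
      refine (((hasDerivAt_id (t : ℂ)).const_mul a).cexp.mul
        (((hasDerivAt_id (t : ℂ)).const_sub 1).div_const a |>.add_const _)).congr_deriv ?_
      simp only [id]; push_cast; field_simp; ring
    exact hG.comp_ofReal
  rw [integral_eq_sub_of_hasDerivAt (fun t _ => hderiv t)
    ((by fun_prop : Continuous fun t : ℝ => ((1 - t : ℝ) : ℂ) * cexp (a * t)).intervalIntegrable _ _)]
  push_cast
  field_simp
  simp only [sub_self, mul_zero, zero_add, mul_one, exp_zero, sub_zero, one_mul]
  ring

theorem setIntegral_Icc_tent_mul_cexp (a : ℂ) :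
    ∫ t in Set.Icc (-1 : ℝ) 1, ((1 - |t| : ℝ) : ℂ) * cexp (a * t) =
      (∫ t in (0 : ℝ)..1, ((1 - t : ℝ) : ℂ) * cexp (a * t)) +
        ∫ t in (0 : ℝ)..1, ((1 - t : ℝ) : ℂ) * cexp (-a * t) := by
  have hint (b c : ℝ) : IntervalIntegrable
      (fun t : ℝ => ((1 - |t| : ℝ) : ℂ) * cexp (a * t)) volume b c :=
    (by fun_prop : Continuous _).intervalIntegrable b c
  rw [integral_Icc_eq_integral_Ioc, ← integral_of_le (by norm_num),
    ← integral_add_adjacent_intervals (hint (-1) 0) (hint 0 1), add_comm,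
    ← neg_zero, ← integral_comp_neg, neg_zero]
  congr 1 <;> refine integral_congr fun t ht => ?_ <;>
    simp [abs_of_nonneg (Set.uIcc_of_le (zero_le_one' ℝ) ▸ ht).1]

theorem sinc2_eq_setIntegral_tent_mul_cexp (w : ℂ) :
    sinc2 w = ∫ t in Set.Icc (-1 : ℝ) 1, ((1 - |t| : ℝ) : ℂ) * cexp (2 * I * w * t) := by
  rw [setIntegral_Icc_tent_mul_cexp, sinc2]
  split_ifs with hw
  · simp only [hw, mul_zero, zero_mul, neg_zero, Complex.exp_zero, mul_one, integral_ofReal]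
    rw [integral_sub intervalIntegrable_const intervalIntegral.intervalIntegrable_id]
    norm_num
  · have h := congrArg₂ (· + ·) (sq_mul_integral_one_sub_mul_cexp (2 * I * w))
      (sq_mul_integral_one_sub_mul_cexp (-(2 * I * w)))
    simp only [neg_sq, ← mul_add, mul_pow, I_sq] at h
    have hcos : cos (2 * w) = (cexp (2 * I * w) + cexp (-(2 * I * w))) / 2 := by
      rw [Complex.cos]; ring_nf
    rw [div_eq_iff (pow_ne_zero 2 hw), Complex.sin_sq, Complex.cos_sq, hcos]
    linear_combination (1 / 4) * h

theorem prod_sinc2_eq_setIntegral {ι : Type*} [Fintype ι] (w : ι → ℂ) :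
    ∏ i, sinc2 (w i) = ∫ t in Set.univ.pi fun _ : ι => Set.Icc (-1 : ℝ) 1,
      ((∏ i, (1 - |t i|) : ℝ) : ℂ) * cexp (2 * I * ∑ i, w i * t i) := by
  simp_rw [sinc2_eq_setIntegral_tent_mul_cexp, ← setIntegral_univ_pi_prod, Finset.prod_mul_distrib,
    Finset.mul_sum, Complex.exp_sum, mul_assoc]
  push_cast
  rfl

namespace Matrix

theorem isHermitian_sum_smul {ι m : Type*} [Fintype ι] {Q : ι → Matrix m m ℝ}
    (hQ : ∀ i, (Q i).IsHermitian) (t : ι → ℝ) : (∑ i, t i • Q i).IsHermitian :=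
  isSelfAdjoint_sum _ fun i _ => (hQ i).smul (IsSelfAdjoint.all (t i))

variable {m n : Type*} [Fintype m] [Fintype n] [DecidableEq n]

theorem l2_opNorm_le_l2_opNorm_map_ofReal (A : Matrix m n ℝ) :
    ‖A‖ ≤ ‖A.map ((↑) : ℝ → ℂ)‖ := by
  refine ContinuousLinearMap.opNorm_le_bound _ (norm_nonneg _) fun x => ?_
  calc ‖toLp 2 (A *ᵥ ofLp x)‖ = ‖toLp 2 (((↑) : ℝ → ℂ) ∘ (A *ᵥ ofLp x))‖ :=
        (EuclideanSpace.norm_toLp_ofReal_comp _).symm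
    _ = ‖toLp 2 (A.map ((↑) : ℝ → ℂ) *ᵥ (((↑) : ℝ → ℂ) ∘ ofLp x))‖ := by
        congr 2; ext i; exact RingHom.map_mulVec Complex.ofRealHom A _ i
    _ ≤ ‖A.map ((↑) : ℝ → ℂ)‖ * ‖x‖ := by
        have := l2_opNorm_mulVec (A.map ((↑) : ℝ → ℂ)) (toLp 2 (((↑) : ℝ → ℂ) ∘ ofLp x))
        rwa [EuclideanSpace.norm_toLp_ofReal_comp] at this

theorem abs_mulVec_dotProduct_self_le (A : Matrix n n ℝ) (x : EuclideanSpace ℝ n) :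
    |A *ᵥ x ⬝ᵥ x| ≤ ‖A‖ * ‖x‖ ^ 2 := by
  rw [dotProduct_comm, ← inner_toEuclideanCLM]
  calc |⟪x, toEuclideanCLM (𝕜 := ℝ) A x⟫| ≤ ‖x‖ * ‖toEuclideanCLM (𝕜 := ℝ) A x‖ :=
        abs_real_inner_le_norm _ _
    _ ≤ ‖x‖ * (‖A‖ * ‖x‖) := by gcongr; exact (toEuclideanCLM (𝕜 := ℝ) A).le_opNorm x
    _ = ‖A‖ * ‖x‖ ^ 2 := by ring

namespace IsHermitian

theorem abs_eigenvalues_le {𝕜 : Type*} [RCLike 𝕜] {A : Matrix n n 𝕜} (hA : A.IsHermitian)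
    (k : n) : |hA.eigenvalues k| ≤ ‖A‖ := by
  have h := l2_opNorm_mulVec A (hA.eigenvectorBasis k)
  rw [hA.mulVec_eigenvectorBasis] at h
  simpa [norm_smul] using h

theorem mulVec_dotProduct_self_eq_sum {A : Matrix n n ℝ} (hA : A.IsHermitian)
    (x : EuclideanSpace ℝ n) :
    A *ᵥ x ⬝ᵥ x = ∑ k, hA.eigenvalues k * hA.eigenvectorBasis.repr x k ^ 2 := by
  rw [dotProduct_comm, ← inner_toEuclideanCLM, ← hA.eigenvectorBasis.sum_inner_mul_inner]
  refine Finset.sum_congr rfl fun k _ => ?_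
  have hAb : toEuclideanCLM (𝕜 := ℝ) A (hA.eigenvectorBasis k) =
      hA.eigenvalues k • hA.eigenvectorBasis k :=
    congrArg (toLp 2) (hA.mulVec_eigenvectorBasis k)
  have hsymm : ⟪hA.eigenvectorBasis k, toEuclideanCLM (𝕜 := ℝ) A x⟫ =
      ⟪toEuclideanCLM (𝕜 := ℝ) A (hA.eigenvectorBasis k), x⟫ :=
    (isSymmetric_toEuclideanLin_iff.mpr hA _ x).symm
  rw [hsymm, hAb, real_inner_smul_left, real_inner_comm, ← OrthonormalBasis.repr_apply_apply]
  ring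

theorem integral_cexp_neg_half_norm_sq_add {A : Matrix n n ℝ} (hA : A.IsHermitian)
    (w : ℂ) (hw : ∀ k, 0 < (1 / 2 - w * hA.eigenvalues k).re) :
    ∫ x : EuclideanSpace ℝ n, cexp (-‖x‖ ^ 2 / 2 + w * (A *ᵥ x ⬝ᵥ x)) =
      ∏ k, (Real.pi / (1 / 2 - w * hA.eigenvalues k)) ^ (1 / 2 : ℂ) := by
  set b := hA.eigenvectorBasis
  have hb : MeasurePreserving (b.measurableEquiv.trans (MeasurableEquiv.toLp 2 (n → ℝ)).symm) :=
    (EuclideanSpace.volume_preserving_symm_measurableEquiv_toLp n).comp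
      b.measurePreserving_measurableEquiv
  have hexp (x : EuclideanSpace ℝ n) : -‖x‖ ^ 2 / 2 + w * (A *ᵥ x ⬝ᵥ x) =
      -∑ k, (1 / 2 - w * hA.eigenvalues k) * (b.repr x k : ℂ) ^ 2 + ∑ k, 0 * (b.repr x k : ℂ) := by
    have hnorm : ‖x‖ ^ 2 = ∑ k, b.repr x k ^ 2 := by
      rw [← b.repr.norm_map, EuclideanSpace.norm_sq_eq]
      simp
    rw [hA.mulVec_dotProduct_self_eq_sum, ← ofReal_pow, hnorm]
    push_cast
    simp only [Finset.sum_div, Finset.mul_sum, zero_mul, Finset.sum_const_zero, add_zero,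
      ← Finset.sum_neg_distrib, ← Finset.sum_add_distrib]
    exact Finset.sum_congr rfl fun k _ => by ring
  simp_rw [hexp]
  refine (hb.integral_comp' fun v : n → ℝ =>
    cexp (-∑ k, (1 / 2 - w * hA.eigenvalues k) * (v k : ℂ) ^ 2 + ∑ k, 0 * (v k : ℂ))).trans ?_
  rw [GaussianFourier.integral_cexp_neg_sum_mul_add hw]
  simp

theorem gaussian_integral_cexp_mul_dotProduct {A : Matrix n n ℝ} (hA : A.IsHermitian)
    (w : ℂ) (hw : ∀ k, 0 < (1 - 2 * w * hA.eigenvalues k).re) :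
    (((2 * Real.pi) ^ (-(Fintype.card n : ℝ) / 2) : ℝ) : ℂ) *
        ∫ x : EuclideanSpace ℝ n, cexp (-‖x‖ ^ 2 / 2 + w * (A *ᵥ x ⬝ᵥ x)) =
      ∏ k, (1 - 2 * w * hA.eigenvalues k) ^ (-(1 : ℂ) / 2) := by
  have h2π : 0 < 2 * Real.pi := by positivity
  have hw' (k : n) : 0 < (1 / 2 - w * hA.eigenvalues k).re := by
    rw [show 1 / 2 - w * hA.eigenvalues k = (1 - 2 * w * hA.eigenvalues k) / 2 by ring,
      div_ofNat_re]
    exact half_pos (hw k)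
  have hfactor (k : n) : (Real.pi / (1 / 2 - w * hA.eigenvalues k) : ℂ) ^ (1 / 2 : ℂ) =
      ((2 * Real.pi : ℝ) : ℂ) ^ (1 / 2 : ℂ) * (1 - 2 * w * hA.eigenvalues k) ^ (-(1 : ℂ) / 2) := by
    rw [show -(1 : ℂ) / 2 = -(1 / 2) by ring,
      ← ofReal_div_cpow h2π (slitPlane_arg_ne_pi (mem_slitPlane_iff.mpr (Or.inl (hw k))))]
    congr 1
    push_cast
    field_simp
  have hcancel : (((2 * Real.pi) ^ (-(Fintype.card n : ℝ) / 2) : ℝ) : ℂ) *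
      (((2 * Real.pi : ℝ) : ℂ) ^ (1 / 2 : ℂ)) ^ Fintype.card n = 1 := by
    rw [show (1 / 2 : ℂ) = ((1 / 2 : ℝ) : ℂ) by push_cast; rfl, ← ofReal_cpow h2π.le, ← ofReal_pow,
      ← ofReal_mul, ← Real.rpow_natCast, ← Real.rpow_mul h2π.le, ← Real.rpow_add h2π,
      show -(Fintype.card n : ℝ) / 2 + 1 / 2 * Fintype.card n = 0 by ring, Real.rpow_zero, ofReal_one]
  rw [hA.integral_cexp_neg_half_norm_sq_add w hw', Finset.prod_congr rfl fun k _ => hfactor k,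
    Finset.prod_mul_distrib, Finset.prod_const, Finset.card_univ, ← mul_assoc, hcancel, one_mul]

end IsHermitian

end Matrix

section FejerGaussian

variable {ι n : Type*} [Fintype ι] [Fintype n]

noncomputable def fejerGaussian (Q : ι → Matrix n n ℝ) (w : ℂ) (t : ι → ℝ)
    (x : EuclideanSpace ℝ n) : ℂ :=
  ((∏ i, (1 - |t i|) : ℝ) : ℂ) * cexp (-‖x‖ ^ 2 / 2 + w * ((∑ i, t i • Q i) *ᵥ x ⬝ᵥ x))

theorem gaussian_mul_prod_sinc2_eq_setIntegral_fejerGaussian (Q : ι → Matrix n n ℝ) (z : ℂ)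
    (x : EuclideanSpace ℝ n) :
    (Real.exp (-‖x‖ ^ 2 / 2) : ℂ) * ∏ i, sinc2 (z * (((1 / 2 : ℝ) * (Q i *ᵥ x ⬝ᵥ x) : ℝ) : ℂ)) =
      ∫ t in Set.univ.pi fun _ : ι => Set.Icc (-1 : ℝ) 1, fejerGaussian Q (z * I) t x := by
  rw [prod_sinc2_eq_setIntegral, ← MeasureTheory.integral_const_mul]
  refine integral_congr_ae (ae_of_all _ fun t => ?_)
  simp only [fejerGaussian, sum_mulVec, smul_mulVec, sum_dotProduct, smul_dotProduct, smul_eq_mul]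
  rw [mul_left_comm, ofReal_exp, ← Complex.exp_add]
  push_cast
  congr 3
  rw [Finset.mul_sum, Finset.mul_sum]
  exact Finset.sum_congr rfl fun i _ => by ring

variable [DecidableEq n]

theorem exists_lt_forall_l2_opNorm_sum_smul_le (Q : ι → Matrix n n ℝ) {a : ℝ}
    (h : ∀ z : ι → ℂ, (∀ i, ‖z i‖ ≤ 1) → ‖∑ i, z i • (Q i).map ((↑) : ℝ → ℂ)‖ < a) :
    ∃ c < a, ∀ t ∈ Set.univ.pi fun _ : ι => Set.Icc (-1 : ℝ) 1, ‖∑ i, t i • Q i‖ ≤ c := by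
  set f : (ι → ℂ) → ℝ := fun z => ‖∑ i, z i • (Q i).map ((↑) : ℝ → ℂ)‖
  have hK : IsCompact (Set.univ.pi fun _ : ι => Metric.closedBall (0 : ℂ) 1) :=
    isCompact_univ_pi fun _ => isCompact_closedBall _ _
  obtain ⟨z₀, hz₀, hmax⟩ := hK.exists_isMaxOn ⟨0, by simp⟩ (by fun_prop : Continuous f).continuousOn
  refine ⟨f z₀, h z₀ (by simpa using hz₀), fun t ht => ?_⟩
  have hmap : (∑ i, t i • Q i).map ((↑) : ℝ → ℂ) = ∑ i, (t i : ℂ) • (Q i).map ((↑) : ℝ → ℂ) := by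
    ext; simp [Matrix.sum_apply]
  calc ‖∑ i, t i • Q i‖ ≤ f fun i => (t i : ℂ) := by
        simpa only [f, hmap] using l2_opNorm_le_l2_opNorm_map_ofReal (∑ i, t i • Q i)
    _ ≤ f z₀ := hmax fun i _ => by simpa [abs_le] using ht i trivial

theorem norm_fejerGaussian_le (Q : ι → Matrix n n ℝ) {w : ℂ} (hw : ‖w‖ ≤ 1) {t : ι → ℝ}
    (ht : t ∈ Set.univ.pi fun _ : ι => Set.Icc (-1 : ℝ) 1) (x : EuclideanSpace ℝ n) :
    ‖fejerGaussian Q w t x‖ ≤ Real.exp (-(1 / 2 - ‖∑ i, t i • Q i‖) * ‖x‖ ^ 2) := by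
  set A := ∑ i, t i • Q i
  have htent : |∏ i, (1 - |t i|)| ≤ 1 := by
    rw [Finset.abs_prod]
    refine Finset.prod_le_one (fun i _ => abs_nonneg _) fun i _ => ?_
    have := abs_le.mpr (ht i (Set.mem_univ i))
    rw [abs_le]; constructor <;> linarith [abs_nonneg (t i)]
  have hq : |w.re * (A *ᵥ x ⬝ᵥ x)| ≤ ‖A‖ * ‖x‖ ^ 2 := by
    rw [abs_mul]
    exact (mul_le_of_le_one_left (abs_nonneg _) ((abs_re_le_norm w).trans hw)).trans
      (abs_mulVec_dotProduct_self_le A x)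
  have hre : (-(‖x‖ : ℂ) ^ 2 / 2 + w * (A *ᵥ x ⬝ᵥ x : ℝ)).re =
      -‖x‖ ^ 2 / 2 + w.re * (A *ᵥ x ⬝ᵥ x) := by
    simp [← ofReal_pow]
  rw [fejerGaussian, norm_mul, norm_real, Real.norm_eq_abs, norm_exp, hre]
  refine (mul_le_of_le_one_left (Real.exp_nonneg _) htent).trans (Real.exp_le_exp.mpr ?_)
  linarith [(abs_le.mp hq).2]

theorem integrable_fejerGaussian (Q : ι → Matrix n n ℝ) {c : ℝ} (hc : c < 1 / 2)
    (hQ : ∀ t ∈ Set.univ.pi fun _ : ι => Set.Icc (-1 : ℝ) 1, ‖∑ i, t i • Q i‖ ≤ c)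
    {w : ℂ} (hw : ‖w‖ ≤ 1) :
    Integrable (Function.uncurry (fejerGaussian Q w))
      ((volume.restrict (Set.univ.pi fun _ : ι => Set.Icc (-1 : ℝ) 1)).prod volume) := by
  have : IsFiniteMeasure (volume.restrict (Set.univ.pi fun _ : ι => Set.Icc (-1 : ℝ) 1)) :=
    isFiniteMeasure_restrict.mpr (isCompact_univ_pi fun _ => isCompact_Icc).measure_ne_top
  refine integrable_uncurry_of_norm_le_exp_neg_mul_sq_norm
    (by unfold fejerGaussian; fun_prop) (sub_pos.mpr hc)
    ((ae_restrict_iff' (MeasurableSet.univ_pi fun _ => measurableSet_Icc)).mpr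
      (ae_of_all _ fun t ht x => ?_))
  exact (norm_fejerGaussian_le Q hw ht x).trans (Real.exp_le_exp.mpr (by gcongr; exact hQ t ht))

theorem integral_fejerGaussian {Q : ι → Matrix n n ℝ} (hQ : ∀ i, (Q i).IsHermitian) {w : ℂ}
    (hw : ‖w‖ ≤ 1) {t : ι → ℝ} (ht : ‖∑ i, t i • Q i‖ < 1 / 2) :
    (((2 * Real.pi) ^ (-(Fintype.card n : ℝ) / 2) : ℝ) : ℂ) * ∫ x, fejerGaussian Q w t x =
      ((∏ i, (1 - |t i|) : ℝ) : ℂ) *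
        ∏ k, (1 - 2 * w * (isHermitian_sum_smul hQ t).eigenvalues k) ^ (-(1 : ℂ) / 2) := by
  have hA := isHermitian_sum_smul hQ t
  simp only [fejerGaussian, MeasureTheory.integral_const_mul]
  rw [mul_left_comm, hA.gaussian_integral_cexp_mul_dotProduct w fun k =>
    re_one_sub_two_mul_ofReal_pos hw ((hA.abs_eigenvalues_le k).trans_lt ht)]

end FejerGaussian

theorem stmt_6 (n m : ℕ) (Q : Fin m → Matrix (Fin n) (Fin n) ℝ)
    (hQ : ∀ i, (Q i).IsHermitian)
    (hnorm : ∀ z : Fin m → ℂ, (∀ i, ‖z i‖ ≤ 1) →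
      ‖Matrix.toEuclideanCLM (𝕜 := ℂ) (∑ i, z i • (Q i).map Complex.ofReal)‖ < 1 / 2)
    (z : ℂ) (hz : ‖z‖ ≤ 1) :
    (((2 * Real.pi) ^ (-(n : ℝ) / 2) : ℝ) : ℂ) *
      ∫ x : EuclideanSpace ℝ (Fin n),
        (Real.exp (-‖x‖ ^ 2 / 2) : ℂ) *
          ∏ i, sinc2 (z * (((1 / 2 : ℝ) * ∑ j, (Q i).mulVec (fun k => x k) j * x j : ℝ) : ℂ)) =
    ∫ t in Set.pi Set.univ (fun _ : Fin m => Set.Icc (-1 : ℝ) 1),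
      ((∏ i, (1 - |t i|) : ℝ) : ℂ) *
        ∏ k : Fin n,
          (1 - 2 * z * Complex.I *
            ((Matrix.IsHermitian.eigenvalues
              (show (∑ i, t i • Q i).IsHermitian by
                unfold Matrix.IsHermitian
                rw [Matrix.conjTranspose_sum]
                exact Finset.sum_congr rfl fun i _ => by
                  rw [Matrix.conjTranspose_smul, (hQ i)]; norm_num) k : ℝ) : ℂ))
            ^ (-(1 : ℂ) / 2) := by
  obtain ⟨c, hc, hcube⟩ := exists_lt_forall_l2_opNorm_sum_smul_le Q hnorm
  have hzI : ‖z * I‖ ≤ 1 := by simpa using hz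
  calc _ = (((2 * Real.pi) ^ (-(n : ℝ) / 2) : ℝ) : ℂ) *
        ∫ x, ∫ t in Set.univ.pi fun _ => Set.Icc (-1 : ℝ) 1, fejerGaussian Q (z * I) t x := by
        congr 1
        exact integral_congr_ae
          (ae_of_all _ (gaussian_mul_prod_sinc2_eq_setIntegral_fejerGaussian Q z))
    _ = ∫ t in Set.univ.pi fun _ => Set.Icc (-1 : ℝ) 1,
          (((2 * Real.pi) ^ (-(n : ℝ) / 2) : ℝ) : ℂ) * ∫ x, fejerGaussian Q (z * I) t x := by
        rw [← integral_integral_swap (integrable_fejerGaussian Q hc hcube hzI),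
          MeasureTheory.integral_const_mul]
    _ = _ := setIntegral_congr_fun (MeasurableSet.univ_pi fun _ => measurableSet_Icc) fun t ht => by
        simpa only [Fintype.card_fin, mul_assoc] using
          integral_fejerGaussian hQ hzI ((hcube t ht).trans_lt hc)
end

section
/- Let g be a univariate complex polynomial of degree N > 0 with g(z) ≠ 0 for all |z| < β, where β > 1, and let h be a branch of log g on the disc |z| < β. Let T_k(z) = Σ_{i=0}^k h^{(i)}(0) z^i / i! be the degree-k Taylor polynomial of h at 0. Then |h(1) − T_k(1)| ≤ N / ((k+1) β^k (β−1)). -/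
/-!
Factor `g z = g 0 * ∏ (1 - z / ζ)` over its roots `ζ`, all of norm `≥ β`. Then
`h 0 + ∑ log (1 - z / ζ)` is a branch of `log g` on the disc, hence equal to `h` there, and
expanding each logarithm gives the Taylor coefficients of `h`: `-(∑ ζ⁻ⁿ) / n` for `n ≥ 1`.
These are at most `N β⁻ⁿ / n` in norm, so the remainder at `z = 1` is dominated by the geometric
tail `N β⁻ᵏ⁻¹ / (k + 1) · ∑ β⁻ⁿ = N / ((k + 1) βᵏ (β - 1))`.
-/

open Polynomial Metric

theorem Complex.eqOn_of_exp_eqOn {U : Set ℂ} (hU : IsOpen U) (hU' : IsPreconnected U)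
    {f₁ f₂ : ℂ → ℂ} (hf₁ : DifferentiableOn ℂ f₁ U) (hf₂ : DifferentiableOn ℂ f₂ U)
    (hexp : Set.EqOn (exp ∘ f₁) (exp ∘ f₂) U) {z₀ : ℂ} (hz₀ : z₀ ∈ U) (heq : f₁ z₀ = f₂ z₀) :
    Set.EqOn f₁ f₂ U := by
  refine hU.eqOn_of_deriv_eq hU' hf₁ hf₂ (fun z hz => ?_) hz₀ heq
  have hd₁ := ((hf₁.differentiableAt (hU.mem_nhds hz)).hasDerivAt).cexp
  have hd₂ := ((hf₂.differentiableAt (hU.mem_nhds hz)).hasDerivAt).cexp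
  have hd := hd₁.congr_of_eventuallyEq (Filter.eventuallyEq_of_mem (hU.mem_nhds hz) hexp.symm)
  have hexpz : exp (f₁ z) = exp (f₂ z) := hexp hz
  have hderiv := hd.unique hd₂
  rw [hexpz] at hderiv
  exact mul_left_cancel₀ (exp_ne_zero _) hderiv

theorem iteratedDeriv_div_factorial_eq_of_hasSum {𝕜 : Type*} [NontriviallyNormedField 𝕜]
    [CompleteSpace 𝕜] [CharZero 𝕜] {f : 𝕜 → 𝕜} {c : ℕ → 𝕜} {r : ℝ} (hr : 0 < r)
    (hf : ∀ z : 𝕜, ‖z‖ < r → HasSum (fun n => c n * z ^ n) (f z)) (n : ℕ) :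
    iteratedDeriv n f 0 / n.factorial = c n := by
  obtain ⟨w, hw0, hwr⟩ := NormedField.exists_norm_lt 𝕜 hr
  set p := FormalMultilinearSeries.ofScalars 𝕜 c
  have hrad : (‖w‖₊ : ENNReal) ≤ p.radius := by
    refine p.le_radius_of_tendsto (l := 0) ?_
    simpa [p, FormalMultilinearSeries.ofScalars_norm, norm_mul, norm_pow] using
      (hf w hwr).summable.tendsto_atTop_zero.norm
  have hp : HasFPowerSeriesAt f p 0 := by
    refine ⟨‖w‖₊, hrad, by simpa using hw0, fun {y} hy => ?_⟩
    have hy : ‖y‖ < r := lt_trans (by simpa using hy) hwr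
    simpa [p, FormalMultilinearSeries.ofScalars_apply_eq, smul_eq_mul, mul_comm] using hf y hy
  exact congrFun (FormalMultilinearSeries.ofScalars_series_injective 𝕜 𝕜
    (hp.analyticAt.hasFPowerSeriesAt.eq_formalMultilinearSeries hp)) n

theorem norm_tsum_nat_add_le_of_norm_le {E : Type*} [NormedAddCommGroup E] {c : ℕ → E}
    {A β : ℝ} (hA : 0 ≤ A) (hβ : 1 < β) (hc : ∀ n, ‖c n‖ ≤ A * β⁻¹ ^ n / n) (k : ℕ) :
    ‖∑' n, c (n + (k + 1))‖ ≤ A / ((k + 1) * β ^ k * (β - 1)) := by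
  have hβ0 : 0 < β := by linarith
  set D := A * β⁻¹ ^ (k + 1) / (k + 1)
  have hgeom : HasSum (fun n : ℕ => D * β⁻¹ ^ n) (D * (1 - β⁻¹)⁻¹) :=
    (hasSum_geometric_of_lt_one (by positivity) (inv_lt_one_of_one_lt₀ hβ)).mul_left D
  have hterm : ∀ n : ℕ, ‖c (n + (k + 1))‖ ≤ D * β⁻¹ ^ n := fun n =>
    calc ‖c (n + (k + 1))‖ ≤ A * β⁻¹ ^ (n + (k + 1)) / (n + (k + 1) : ℕ) := hc _
      _ ≤ A * β⁻¹ ^ (n + (k + 1)) / (k + 1) := by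
          gcongr
          push_cast
          linarith [n.cast_nonneg (α := ℝ)]
      _ = D * β⁻¹ ^ n := by ring
  refine (tsum_of_norm_bounded hgeom hterm).trans_eq ?_
  have : β - 1 ≠ 0 := by linarith
  simp only [D, inv_pow]
  field_simp
  ring

namespace Polynomial

section Splits

variable {K : Type*} [Field K] [DecidableEq K] {g : K[X]}

theorem eval_eq_eval_zero_mul_prod_roots (hsplit : g.Splits) (h0 : g.eval 0 ≠ 0) (z : K) :
    g.eval z = g.eval 0 * ∏ a : g.roots, (1 - z / a) := by
  have hroot_ne : ∀ a ∈ g.roots, a ≠ 0 := by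
    rintro a ha rfl
    exact h0 (mem_roots'.1 ha).2
  have hprod : ∀ f : K → K, ∏ a : g.roots, f a = (g.roots.map f).prod := fun f => by
    rw [Finset.prod_eq_multiset_prod, Multiset.map_univ]
  rw [hsplit.eval_eq_prod_roots, hsplit.eval_eq_prod_roots, hprod fun a => 1 - z / a, mul_assoc,
    ← Multiset.prod_map_mul]
  congr 2
  refine Multiset.map_congr rfl fun a ha => ?_
  field_simp [hroot_ne a ha]
  ring

end Splits

variable {g : ℂ[X]} {β : ℝ}

theorem le_norm_of_mem_roots (hg : ∀ z : ℂ, ‖z‖ < β → g.eval z ≠ 0) {a : ℂ} (ha : a ∈ g.roots) :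
    β ≤ ‖a‖ :=
  not_lt.1 fun hlt => hg a hlt (mem_roots'.1 ha).2

theorem norm_div_root_lt_one (hg : ∀ z : ℂ, ‖z‖ < β → g.eval z ≠ 0) {z : ℂ} (hz : ‖z‖ < β)
    (a : g.roots) : ‖z / a‖ < 1 := by
  have hβa := le_norm_of_mem_roots hg (Multiset.coe_mem (x := a))
  rw [norm_div, div_lt_one (by linarith [norm_nonneg z])]
  linarith

theorem one_sub_div_root_mem_slitPlane (hg : ∀ z : ℂ, ‖z‖ < β → g.eval z ≠ 0) {z : ℂ}
    (hz : ‖z‖ < β) (a : g.roots) : 1 - z / a ∈ Complex.slitPlane := by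
  simpa [sub_eq_add_neg] using Complex.mem_slitPlane_of_norm_lt_one (z := -(z / a))
    (by simpa using norm_div_root_lt_one hg hz a)

/-- A branch of `log (g z / g 0)` on the root-free disc around `0`. -/
noncomputable def logRatio (g : ℂ[X]) (z : ℂ) : ℂ :=
  ∑ a : g.roots, Complex.log (1 - z / a)

/-- The Taylor coefficients of `logRatio g`; the division by `n = 0` makes the constant term `0`. -/
noncomputable def logCoeff (g : ℂ[X]) (n : ℕ) : ℂ :=
  -(∑ a : g.roots, (a : ℂ)⁻¹ ^ n) / n

theorem eval_zero_mul_exp_logRatio (hg : ∀ z : ℂ, ‖z‖ < β → g.eval z ≠ 0) {z : ℂ}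
    (hz : ‖z‖ < β) : g.eval 0 * Complex.exp (logRatio g z) = g.eval z := by
  have h0 : g.eval 0 ≠ 0 := hg 0 (by simpa using (norm_nonneg z).trans_lt hz)
  rw [eval_eq_eval_zero_mul_prod_roots (IsAlgClosed.splits g) h0 z, logRatio, Complex.exp_sum]
  congr 1
  exact Finset.prod_congr rfl fun a _ =>
    Complex.exp_log (Complex.slitPlane_ne_zero (one_sub_div_root_mem_slitPlane hg hz a))

theorem differentiableOn_logRatio (hg : ∀ z : ℂ, ‖z‖ < β → g.eval z ≠ 0) :
    DifferentiableOn ℂ (logRatio g) (ball 0 β) := fun _ hz =>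
  (DifferentiableAt.fun_sum fun a _ => ((differentiableAt_const _).sub
    (differentiableAt_id.div_const _)).clog
      (one_sub_div_root_mem_slitPlane hg (mem_ball_zero_iff.1 hz) a)).differentiableWithinAt

theorem hasSum_logCoeff_mul_pow (hg : ∀ z : ℂ, ‖z‖ < β → g.eval z ≠ 0) {z : ℂ}
    (hz : ‖z‖ < β) : HasSum (fun n => logCoeff g n * z ^ n) (logRatio g z) := by
  have hterm : ∀ a : g.roots, HasSum (fun n : ℕ => -((z / a) ^ n / n)) (Complex.log (1 - z / a)) :=
    fun a => by simpa using (Complex.hasSum_taylorSeries_neg_log (norm_div_root_lt_one hg hz a)).neg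
  rw [logRatio]
  convert hasSum_sum fun a _ => hterm a using 1
  ext n
  simp only [logCoeff, Finset.sum_div, neg_div, ← Finset.sum_neg_distrib, Finset.sum_mul]
  refine Finset.sum_congr rfl fun a _ => ?_
  ring

theorem norm_logCoeff_le (hg : ∀ z : ℂ, ‖z‖ < β → g.eval z ≠ 0) (hβ : 0 < β) (n : ℕ) :
    ‖logCoeff g n‖ ≤ g.natDegree * β⁻¹ ^ n / n := by
  rw [logCoeff, norm_div, norm_neg, Complex.norm_natCast]
  gcongr
  calc ‖∑ a : g.roots, (a : ℂ)⁻¹ ^ n‖ ≤ ∑ _a : g.roots, β⁻¹ ^ n := by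
        refine (norm_sum_le _ _).trans (Finset.sum_le_sum fun a _ => ?_)
        rw [norm_pow, norm_inv]
        gcongr
        exact le_norm_of_mem_roots hg (Multiset.coe_mem (x := a))
    _ ≤ g.natDegree * β⁻¹ ^ n := by
        rw [Finset.sum_const, Finset.card_univ, Multiset.card_coe, nsmul_eq_mul]
        gcongr
        exact_mod_cast card_roots' g

end Polynomial

theorem stmt_10_general (g : Polynomial ℂ) (N : ℕ) (hdeg : g.natDegree = N)
    (β : ℝ) (hβ : 1 < β) (hg : ∀ z : ℂ, ‖z‖ < β → g.eval z ≠ 0)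
    (h : ℂ → ℂ) (hh : DifferentiableOn ℂ h (ball (0 : ℂ) β))
    (hlog : ∀ z ∈ ball (0 : ℂ) β, Complex.exp (h z) = g.eval z) (k : ℕ) :
    ‖h 1 - ∑ i ∈ Finset.range (k + 1), iteratedDeriv i h 0 / (Nat.factorial i)‖ ≤
      N / ((k + 1) * β ^ k * (β - 1)) := by
  have hβ0 : 0 < β := by linarith
  have h0 : (0 : ℂ) ∈ ball (0 : ℂ) β := mem_ball_self hβ0
  have hbranch : Set.EqOn h (fun z => h 0 + g.logRatio z) (ball 0 β) := by
    refine Complex.eqOn_of_exp_eqOn isOpen_ball (convex_ball 0 β).isPreconnected hh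
      ((differentiableOn_logRatio hg).const_add _) (fun z hz => ?_) h0 (by simp [logRatio])
    simp only [Function.comp, Complex.exp_add, hlog 0 h0, hlog z hz,
      eval_zero_mul_exp_logRatio hg (mem_ball_zero_iff.1 hz)]
  set c := Function.update (logCoeff g) 0 (h 0)
  have hc : ∀ z : ℂ, ‖z‖ < β → HasSum (fun n => c n * z ^ n) (h z) := fun z hz => by
    have hupd : (fun n => c n * z ^ n) =
        Function.update (fun n => logCoeff g n * z ^ n) 0 (h 0) := by
      funext n
      rcases n with _ | n <;> simp [c]
    rw [hupd, hbranch (mem_ball_zero_iff.2 hz)]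
    simpa [logCoeff] using (hasSum_logCoeff_mul_pow hg hz).update 0 (h 0)
  have hrem : HasSum (fun n => c (n + (k + 1))) (h 1 - ∑ i ∈ Finset.range (k + 1),
      iteratedDeriv i h 0 / (Nat.factorial i)) := by
    simp only [iteratedDeriv_div_factorial_eq_of_hasSum hβ0 hc]
    exact (hasSum_nat_add_iff' (k + 1)).2 (by simpa using hc 1 (by simpa using hβ))
  have htail : ∀ n, c (n + (k + 1)) = logCoeff g (n + (k + 1)) := fun n =>
    Function.update_of_ne (by omega) _ _
  rw [← hrem.tsum_eq, ← hdeg]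
  simp only [htail]
  exact norm_tsum_nat_add_le_of_norm_le (by positivity) hβ (norm_logCoeff_le hg hβ0) k

theorem stmt_10 (g : Polynomial ℂ) (N : ℕ) (hN : 0 < N) (hdeg : g.natDegree = N)
    (β : ℝ) (hβ : 1 < β) (hg : ∀ z : ℂ, ‖z‖ < β → g.eval z ≠ 0)
    (h : ℂ → ℂ) (hh : DifferentiableOn ℂ h (ball (0 : ℂ) β))
    (hlog : ∀ z ∈ ball (0 : ℂ) β, Complex.exp (h z) = g.eval z) (k : ℕ) :
    ‖h 1 - ∑ i ∈ Finset.range (k + 1), iteratedDeriv i h 0 / (Nat.factorial i)‖ ≤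
      N / ((k + 1) * β ^ k * (β - 1)) :=
  stmt_10_general g N hdeg β hβ hg h hh hlog k
end
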